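/- arXiv:1601.00177 — 4 statements merged into one kernel-verified Lean document; each statement's English description precedes it below -/
import Mathlib

section
/- Let r be a positive integer and let f be a finitely supported function from {i/r : i ∈ ℤ≥0} to the nonnegative reals, regarded as a generalized polynomial f(t) = ∑_j f_j t^j with nonnegative coefficients and exponents in (1/r)ℤ≥0. For n ∈ ℤ>0 define f*_n(t) := Ψ(f(t)^n), where Ψ is the linear map sending t^j to t^⌈j⌉. Then for every real x ≥ 1 and every n ≥ 1: f(x)^n ≤ f*_n(x) ≤ x^(1 - 1/r) · f(x)^n. -/
/-! Evaluation at `x > 0` is a ring homomorphism, so `f(x)^n` is the value of `f^n`, whose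
coefficients are again nonnegative and whose exponents again lie in `(1/r)ℤ≥0`. Rounding an
exponent `j ∈ (1/r)ℤ≥0` up to `⌈j⌉` raises it by at least `0` and at most `1 - 1/r`, so for
`x ≥ 1` each term `c x^j` of `f^n` grows by a factor between `1` and `x^(1 - 1/r)`. -/

open Finsupp

/-- Evaluation of a generalized polynomial `∑ c_j t^j` (a finitely supported
function `ℚ →₀ ℝ`, with convolution product) at a positive real `x`, using
real exponentiation. -/
noncomputable def gpEval (f : AddMonoidAlgebra ℝ ℚ) (x : ℝ) : ℝ :=
  f.coeff.sum fun j c => c * x ^ (j : ℝ)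

/-- The linear rounding operator `Ψ` with `Ψ(t^j) = t^⌈j⌉`. -/
noncomputable def gpPsi (f : AddMonoidAlgebra ℝ ℚ) : AddMonoidAlgebra ℝ ℚ :=
  AddMonoidAlgebra.ofCoeff (Finsupp.mapDomain (fun j => (⌈j⌉ : ℚ)) f.coeff)

theorem Int.ceil_intCast_div_natCast_le {K : Type*} [Field K] [LinearOrder K]
    [IsStrictOrderedRing K] [FloorRing K] (i : ℤ) {r : ℕ} (hr : 0 < r) :
    (⌈(i : K) / r⌉ : K) ≤ i / r + 1 - 1 / r := by
  have hr' : (0 : K) < r := by exact_mod_cast hr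
  have hlt : (r * ⌈(i : K) / r⌉ : K) < i + r := by
    calc (r * ⌈(i : K) / r⌉ : K) < r * ((i : K) / r + 1) :=
          mul_lt_mul_of_pos_left (Int.ceil_lt_add_one _) hr'
      _ = i + r := by field_simp
  -- `r * ⌈i / r⌉` is an integer strictly below `i + r`
  have hle : (r * ⌈(i : K) / r⌉ : ℤ) ≤ i + r - 1 := by
    have : (r * ⌈(i : K) / r⌉ : ℤ) < i + r := by exact_mod_cast hlt
    omega
  have hrhs : (i : K) / r + 1 - 1 / r = (i + r - 1) / r := by field_simp
  rw [hrhs, le_div_iff₀ hr', mul_comm]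
  exact_mod_cast hle

namespace AddMonoidAlgebra

variable {R G : Type*} [Semiring R] [AddMonoid G]

theorem support_coeff_pow_subset {f : AddMonoidAlgebra R G} {M : AddSubmonoid G}
    (hf : ↑f.coeff.support ⊆ (M : Set G)) (n : ℕ) : ↑(f ^ n).coeff.support ⊆ (M : Set G) := by
  classical
  induction n with
  | zero =>
    intro a ha
    rw [pow_zero] at ha
    obtain rfl := Finset.mem_singleton.mp (support_coeff_one_subset ha)
    exact M.zero_mem
  | succ n ih =>
    intro a ha
    rw [pow_succ] at ha
    obtain ⟨b, hb, c, hc, rfl⟩ := Finset.mem_add.mp (support_coeff_mul_subset _ _ ha)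
    exact M.add_mem (ih hb) (hf hc)

variable [PartialOrder R] [IsOrderedRing R]

theorem coeff_mul_nonneg {f g : AddMonoidAlgebra R G} (hf : ∀ a, 0 ≤ f.coeff a)
    (hg : ∀ a, 0 ≤ g.coeff a) (a : G) : 0 ≤ (f * g).coeff a := by
  classical
  rw [coeff_mul]
  refine Finset.sum_nonneg fun b _ => Finset.sum_nonneg fun c _ => ?_
  dsimp only
  split_ifs
  exacts [mul_nonneg (hf b) (hg c), le_rfl]

theorem coeff_pow_nonneg {f : AddMonoidAlgebra R G} (hf : ∀ a, 0 ≤ f.coeff a) (n : ℕ) (a : G) :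
    0 ≤ (f ^ n).coeff a := by
  induction n generalizing a with
  | zero =>
    classical
    rw [pow_zero, one_def, coeff_single, Finsupp.single_apply]
    split_ifs <;> simp
  | succ n ih => rw [pow_succ]; exact coeff_mul_nonneg ih hf a

end AddMonoidAlgebra

noncomputable def gpEvalAlgHom (x : ℝ) (hx : 0 < x) : AddMonoidAlgebra ℝ ℚ →ₐ[ℝ] ℝ :=
  AddMonoidAlgebra.lift ℝ ℝ ℚ
    { toFun := fun j => x ^ (j.toAdd : ℝ)
      map_one' := by simp
      map_mul' := fun a b => by simp [Real.rpow_add hx] }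

theorem gpEvalAlgHom_apply (x : ℝ) (hx : 0 < x) (f : AddMonoidAlgebra ℝ ℚ) :
    gpEvalAlgHom x hx f = gpEval f x := by
  simp [gpEvalAlgHom, AddMonoidAlgebra.lift_apply, gpEval]

theorem gpEval_pow {x : ℝ} (hx : 0 < x) (f : AddMonoidAlgebra ℝ ℚ) (n : ℕ) :
    gpEval (f ^ n) x = gpEval f x ^ n := by
  rw [← gpEvalAlgHom_apply x hx, map_pow, gpEvalAlgHom_apply]

theorem gpEval_gpPsi (g : AddMonoidAlgebra ℝ ℚ) (x : ℝ) :
    gpEval (gpPsi g) x = g.coeff.sum fun j c => c * x ^ (⌈j⌉ : ℝ) := by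
  rw [gpEval, gpPsi, AddMonoidAlgebra.coeff_ofCoeff,
    Finsupp.sum_mapDomain_index (fun _ => zero_mul _) (fun _ _ _ => add_mul _ _ _)]
  simp

theorem gpEval_le_gpEval_gpPsi {g : AddMonoidAlgebra ℝ ℚ} (hg : ∀ j, 0 ≤ g.coeff j)
    {x : ℝ} (hx : 1 ≤ x) : gpEval g x ≤ gpEval (gpPsi g) x := by
  rw [gpEval_gpPsi, gpEval]
  refine Finset.sum_le_sum fun j _ => mul_le_mul_of_nonneg_left ?_ (hg j)
  exact Real.rpow_le_rpow_of_exponent_le hx (by exact_mod_cast Int.le_ceil j)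

theorem gpEval_gpPsi_le {r : ℕ} (hr : 0 < r) {g : AddMonoidAlgebra ℝ ℚ}
    (hg : ∀ j, 0 ≤ g.coeff j)
    (hsupp : ↑g.coeff.support ⊆ (AddSubmonoid.multiples (r : ℚ)⁻¹ : Set ℚ))
    {x : ℝ} (hx : 1 ≤ x) : gpEval (gpPsi g) x ≤ x ^ (1 - 1 / (r : ℝ)) * gpEval g x := by
  rw [gpEval_gpPsi, gpEval, Finsupp.sum, Finsupp.sum, Finset.mul_sum]
  refine Finset.sum_le_sum fun j hj => ?_
  obtain ⟨i, hi⟩ := hsupp hj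
  have hji : j = ((i : ℤ) : ℚ) / r := by rw [← hi]; simp [div_eq_mul_inv]
  have hceil : (⌈j⌉ : ℝ) ≤ (j : ℝ) + (1 - 1 / r) := by
    have h := (Rat.cast_le (K := ℝ)).mpr (Int.ceil_intCast_div_natCast_le (K := ℚ) i hr)
    rw [hji]
    push_cast at h ⊢
    linarith
  calc g.coeff j * x ^ (⌈j⌉ : ℝ)
      ≤ g.coeff j * x ^ ((j : ℝ) + (1 - 1 / r)) :=
        mul_le_mul_of_nonneg_left (Real.rpow_le_rpow_of_exponent_le hx hceil) (hg _)
    _ = x ^ (1 - 1 / (r : ℝ)) * (g.coeff j * x ^ (j : ℝ)) := by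
        rw [Real.rpow_add (zero_lt_one.trans_le hx)]; ring

theorem stmt_2_general (r : ℕ) (hr : 0 < r) (f : AddMonoidAlgebra ℝ ℚ)
    (hexp : ∀ j ∈ f.coeff.support, ∃ i : ℕ, j = (i : ℚ) / r)
    (hpos : ∀ j, 0 ≤ f.coeff j)
    (x : ℝ) (hx : 1 ≤ x) (n : ℕ) :
    gpEval f x ^ n ≤ gpEval (gpPsi (f ^ n)) x ∧
      gpEval (gpPsi (f ^ n)) x ≤ x ^ (1 - 1 / (r : ℝ)) * gpEval f x ^ n := by
  have hsupp : ↑f.coeff.support ⊆ (AddSubmonoid.multiples (r : ℚ)⁻¹ : Set ℚ) := fun j hj => by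
    obtain ⟨i, rfl⟩ := hexp j hj
    exact ⟨i, by simp [div_eq_mul_inv]⟩
  have hpow := AddMonoidAlgebra.coeff_pow_nonneg hpos n
  rw [← gpEval_pow (zero_lt_one.trans_le hx)]
  exact ⟨gpEval_le_gpEval_gpPsi hpow hx,
    gpEval_gpPsi_le hr hpow (AddMonoidAlgebra.support_coeff_pow_subset hsupp n) hx⟩

theorem stmt_2 (r : ℕ) (hr : 0 < r) (f : AddMonoidAlgebra ℝ ℚ)
    (hexp : ∀ j ∈ f.coeff.support, ∃ i : ℕ, j = (i : ℚ) / r)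
    (hpos : ∀ j, 0 ≤ f.coeff j)
    (x : ℝ) (hx : 1 ≤ x) (n : ℕ) (hn : 1 ≤ n) :
    gpEval f x ^ n ≤ gpEval (gpPsi (f ^ n)) x ∧
      gpEval (gpPsi (f ^ n)) x ≤ x ^ (1 - 1 / (r : ℝ)) * gpEval f x ^ n :=
  stmt_2_general r hr f hexp hpos x hx n
end

section
/- Let f and g be generalized polynomials with nonnegative real coefficients and nonnegative rational exponents. Suppose there exist j in the support of f and j' in the support of g such that the fractional parts of j and j' both lie in (0, 1/2]. Then Ψ(f·g) ≠ Ψ(f)·Ψ(g). -/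
open Finsupp

/-!
Compare both sides under the linear functional `D h = ∑ h_k k`, the derivative at `t = 1`.
Since `D (Ψ h) = ∑ h_k ⌈k⌉` and exponents add under multiplication, `D (Ψ (f g))` is
`∑ f_j g_j' ⌈j + j'⌉` while `D (Ψ f · Ψ g)` is `∑ f_j g_j' (⌈j⌉ + ⌈j'⌉)`. Termwise
`⌈j + j'⌉ ≤ ⌈j⌉ + ⌈j'⌉`, strictly when both fractional parts are positive and add up to at
most `1`; as all coefficients are nonnegative, the two values differ.
-/

theorem Int.ceil_add_lt_of_fract {R : Type*} [CommRing R] [LinearOrder R] [IsStrictOrderedRing R]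
    [FloorRing R] {a b : R} (ha : 0 < Int.fract a) (hb : 0 < Int.fract b)
    (hab : Int.fract a + Int.fract b ≤ 1) : ⌈a + b⌉ < ⌈a⌉ + ⌈b⌉ := by
  unfold Int.fract at ha hb hab
  have ha' : ⌊a⌋ < ⌈a⌉ := by rw [Int.lt_ceil]; linarith
  have hb' : ⌊b⌋ < ⌈b⌉ := by rw [Int.lt_ceil]; linarith
  have hab' : ⌈a + b⌉ ≤ ⌊a⌋ + ⌊b⌋ + 1 := by rw [Int.ceil_le]; push_cast; linarith
  omega

namespace Finsupp

variable {α R : Type*} [CommSemiring R] [PartialOrder R]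

theorem linearCombination_le_linearCombination [IsOrderedRing R] {c : α →₀ R}
    (hc : ∀ a, 0 ≤ c a) {v w : α → R} (hvw : ∀ a ∈ c.support, v a ≤ w a) :
    linearCombination R v c ≤ linearCombination R w c := by
  simp only [linearCombination_apply, Finsupp.sum, smul_eq_mul]
  exact Finset.sum_le_sum fun a ha => mul_le_mul_of_nonneg_left (hvw a ha) (hc a)

theorem linearCombination_lt_linearCombination [IsStrictOrderedRing R] {c : α →₀ R}
    (hc : ∀ a, 0 ≤ c a) {v w : α → R} (hvw : ∀ a ∈ c.support, v a ≤ w a)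
    (hlt : ∃ a ∈ c.support, v a < w a) :
    linearCombination R v c < linearCombination R w c := by
  simp only [linearCombination_apply, Finsupp.sum, smul_eq_mul]
  obtain ⟨a₀, ha₀, hlt⟩ := hlt
  refine Finset.sum_lt_sum (fun a ha => mul_le_mul_of_nonneg_left (hvw a ha) (hc a)) ⟨a₀, ha₀, ?_⟩
  exact mul_lt_mul_of_pos_left hlt ((hc a₀).lt_of_ne' (mem_support_iff.mp ha₀))

end Finsupp

theorem AddMonoidAlgebra.linearCombination_coeff_mul {R G : Type*} [CommSemiring R] [AddMonoid G]
    (w : G → R) (f g : AddMonoidAlgebra R G) :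
    linearCombination R w (f * g).coeff =
      linearCombination R (fun a => linearCombination R (fun b => w (a + b)) g.coeff) f.coeff := by
  rw [AddMonoidAlgebra.mul_def, AddMonoidAlgebra.coeff_finsuppSum, map_finsuppSum]
  simp only [AddMonoidAlgebra.coeff_finsuppSum, map_finsuppSum, AddMonoidAlgebra.coeff_single,
    linearCombination_single]
  simp only [linearCombination_apply, smul_eq_mul, Finsupp.mul_sum, mul_assoc]

theorem linearCombination_gpPsi (w : ℚ → ℝ) (f : AddMonoidAlgebra ℝ ℚ) :
    linearCombination ℝ w (gpPsi f).coeff = linearCombination ℝ (fun a => w ⌈a⌉) f.coeff := by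
  rw [gpPsi, AddMonoidAlgebra.coeff_ofCoeff, linearCombination_mapDomain]; rfl

theorem stmt_7_general (f g : AddMonoidAlgebra ℝ ℚ)
    (hfpos : ∀ j, 0 ≤ f.coeff j) (hgpos : ∀ j, 0 ≤ g.coeff j)
    (h : ∃ j ∈ f.coeff.support, ∃ j' ∈ g.coeff.support,
      (0 < j - ⌊j⌋ ∧ j - ⌊j⌋ ≤ 1/2) ∧ (0 < j' - ⌊j'⌋ ∧ j' - ⌊j'⌋ ≤ 1/2)) :
    gpPsi (f * g) ≠ gpPsi f * gpPsi g := by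
  obtain ⟨j₀, hj₀, j₀', hj₀', ⟨hj₀pos, hj₀half⟩, ⟨hj₀'pos, hj₀'half⟩⟩ := h
  rw [Int.self_sub_floor] at hj₀pos hj₀half hj₀'pos hj₀'half
  intro heq
  have hderiv := congrArg (fun p => linearCombination ℝ (fun q : ℚ => (q : ℝ)) p.coeff) heq
  simp only [linearCombination_gpPsi, AddMonoidAlgebra.linearCombination_coeff_mul,
    Rat.cast_intCast, ← Int.cast_add] at hderiv
  refine hderiv.not_lt
    (linearCombination_lt_linearCombination hfpos (fun a _ => ?_) ⟨j₀, hj₀, ?_⟩)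
  · exact linearCombination_le_linearCombination hgpos fun b _ => mod_cast Int.ceil_add_le a b
  · refine linearCombination_lt_linearCombination hgpos
      (fun b _ => mod_cast Int.ceil_add_le j₀ b)
      ⟨j₀', hj₀', mod_cast Int.ceil_add_lt_of_fract hj₀pos hj₀'pos (by linarith)⟩

theorem stmt_7 (f g : AddMonoidAlgebra ℝ ℚ)
    (hfexp : ∀ j ∈ f.coeff.support, 0 ≤ j) (hgexp : ∀ j ∈ g.coeff.support, 0 ≤ j)
    (hfpos : ∀ j, 0 ≤ f.coeff j) (hgpos : ∀ j, 0 ≤ g.coeff j)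
    (h : ∃ j ∈ f.coeff.support, ∃ j' ∈ g.coeff.support,
      (0 < j - ⌊j⌋ ∧ j - ⌊j⌋ ≤ 1/2) ∧ (0 < j' - ⌊j'⌋ ∧ j' - ⌊j'⌋ ≤ 1/2)) :
    gpPsi (f * g) ≠ gpPsi f * gpPsi g :=
  stmt_7_general f g hfpos hgpos h
end

section
/- Let E, F be real vector spaces, P ⊆ E and Q ⊆ F convex sets containing the origin, and let P ⊕ Q := convexHull((P × {0}) ∪ ({0} × Q)). Then for every real λ > 0 and every (x, y) ∈ E × F: (x, y) ∈ λ • (P ⊕ Q) if and only if there exist real numbers λ₁, λ₂ ≥ 0 with λ₁ + λ₂ = λ, x ∈ λ₁ • P, and y ∈ λ₂ • Q (where 0 • P is interpreted as {0}). -/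
/-! Since `P × {0}` and `{0} × Q` are convex and nonempty, the hull of their union is their convex
join, whose points are `a • (p, 0) + b • (0, q)` with `a + b = 1`; multiplying the weights by `λ`
gives `λ₁` and `λ₂`. -/

open Pointwise Set

section

variable {𝕜 E F : Type*} [AddCommGroup E] [AddCommGroup F]

theorem mem_convexJoin_prod_zero_iff [Semiring 𝕜] [PartialOrder 𝕜] [Module 𝕜 E] [Module 𝕜 F]
    {P : Set E} {Q : Set F} {x : E} {y : F} :
    (x, y) ∈ convexJoin 𝕜 (P ×ˢ {0}) ({0} ×ˢ Q) ↔
      ∃ a b : 𝕜, 0 ≤ a ∧ 0 ≤ b ∧ a + b = 1 ∧ x ∈ a • P ∧ y ∈ b • Q := by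
  simp only [mem_convexJoin, segment, Prod.exists, mem_prod, mem_singleton_iff,
    mem_smul_set]
  constructor
  · rintro ⟨p, _, ⟨hp, rfl⟩, _, q, ⟨rfl, hq⟩, a, b, ha, hb, hab, hxy⟩
    simp only [Prod.smul_mk, smul_zero, Prod.mk_add_mk, add_zero, zero_add, Prod.mk.injEq] at hxy
    exact ⟨a, b, ha, hb, hab, ⟨p, hp, hxy.1⟩, ⟨q, hq, hxy.2⟩⟩
  · rintro ⟨a, b, ha, hb, hab, ⟨p, hp, rfl⟩, ⟨q, hq, rfl⟩⟩
    exact ⟨p, 0, ⟨hp, rfl⟩, 0, q, ⟨rfl, hq⟩, a, b, ha, hb, hab, by simp⟩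

theorem mem_smul_convexJoin_prod_zero_iff [Field 𝕜] [LinearOrder 𝕜] [IsStrictOrderedRing 𝕜]
    [Module 𝕜 E] [Module 𝕜 F] {P : Set E} {Q : Set F} {l : 𝕜} (hl : 0 < l) {x : E} {y : F} :
    (x, y) ∈ l • convexJoin 𝕜 (P ×ˢ {0}) ({0} ×ˢ Q) ↔
      ∃ l₁ l₂ : 𝕜, 0 ≤ l₁ ∧ 0 ≤ l₂ ∧ l₁ + l₂ = l ∧ x ∈ l₁ • P ∧ y ∈ l₂ • Q := by
  rw [mem_smul_set_iff_inv_smul_mem₀ hl.ne', Prod.smul_mk, mem_convexJoin_prod_zero_iff]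
  constructor
  · rintro ⟨a, b, ha, hb, hab, hx, hy⟩
    refine ⟨l * a, l * b, by positivity, by positivity, by rw [← mul_add, hab, mul_one], ?_, ?_⟩
    · rwa [mul_smul, mem_smul_set_iff_inv_smul_mem₀ hl.ne']
    · rwa [mul_smul, mem_smul_set_iff_inv_smul_mem₀ hl.ne']
  · rintro ⟨l₁, l₂, h₁, h₂, hsum, hx, hy⟩
    refine ⟨l⁻¹ * l₁, l⁻¹ * l₂, by positivity, by positivity, ?_, ?_, ?_⟩
    · rw [← mul_add, hsum, inv_mul_cancel₀ hl.ne']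
    · rw [mul_smul]; exact smul_mem_smul_set hx
    · rw [mul_smul]; exact smul_mem_smul_set hy

end

theorem stmt_10 {E F : Type*} [AddCommGroup E] [Module ℝ E]
    [AddCommGroup F] [Module ℝ F]
    (P : Set E) (Q : Set F) (hP : Convex ℝ P) (hQ : Convex ℝ Q)
    (h0P : (0 : E) ∈ P) (h0Q : (0 : F) ∈ Q)
    (l : ℝ) (hl : 0 < l) (x : E) (y : F) :
    (x, y) ∈ l • convexHull ℝ ((P ×ˢ ({0} : Set F)) ∪ (({0} : Set E) ×ˢ Q)) ↔
      ∃ l₁ l₂ : ℝ, 0 ≤ l₁ ∧ 0 ≤ l₂ ∧ l₁ + l₂ = l ∧ x ∈ l₁ • P ∧ y ∈ l₂ • Q := by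
  rw [(hP.prod (convex_singleton (0 : F))).convexHull_union
    ((convex_singleton (0 : E)).prod hQ)
    ⟨(0, 0), h0P, rfl⟩ ⟨(0, 0), rfl, h0Q⟩]
  exact mem_smul_convexJoin_prod_zero_iff hl
end

section
/- Let R ⊆ ℝ² be the convex hull of the four points (2,0), (-2,0), (0,-1), (0,3). Then for every natural number m, the number of lattice points of ℤ² in the dilate m • R equals 8m² + 2m + 1. -/
open Pointwise

lemma hull_mem_iff (x y : ℝ) :
    (x, y) ∈ convexHull ℝ ({((2:ℝ), (0:ℝ)), (-2, 0), (0, -1), (0, 3)} : Set (ℝ × ℝ)) ↔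
      3 * |x| + 2 * y ≤ 6 ∧ |x| ≤ 2 * y + 2 := by
  constructor
  · intro h
    have hsub : convexHull ℝ ({((2:ℝ), (0:ℝ)), (-2, 0), (0, -1), (0, 3)} : Set (ℝ × ℝ)) ⊆
        {p : ℝ × ℝ | 3 * |p.1| + 2 * p.2 ≤ 6 ∧ |p.1| ≤ 2 * p.2 + 2} := by
      apply convexHull_min
      · intro p hp
        simp only [Set.mem_insert_iff, Set.mem_singleton_iff] at hp
        rcases hp with h | h | h | h <;> subst h <;> norm_num
      · intro p hp q hq a b ha hb hab
        simp only [Set.mem_setOf_eq] at *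
        have h1 : |(a • p + b • q).1| ≤ a * |p.1| + b * |q.1| := by
          have : (a • p + b • q).1 = a * p.1 + b * q.1 := rfl
          rw [this]
          calc |a * p.1 + b * q.1| ≤ |a * p.1| + |b * q.1| := abs_add_le _ _
            _ = a * |p.1| + b * |q.1| := by
                rw [abs_mul, abs_mul, abs_of_nonneg ha, abs_of_nonneg hb]
        have h2 : (a • p + b • q).2 = a * p.2 + b * q.2 := rfl
        constructor
        · nlinarith [hp.1, hq.1]
        · nlinarith [hp.2, hq.2]
    exact hsub h
  · rintro ⟨h1, h2⟩
    have key : ∑ i : Fin 4, (![(|x| + x)/4, (|x| - x)/4, (6 - 3*|x| - 2*y)/8, (2 - |x| + 2*y)/8] i) •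
        (![((2:ℝ), (0:ℝ)), (-2, 0), (0, -1), (0, 3)] i) ∈
        convexHull ℝ ({((2:ℝ), (0:ℝ)), (-2, 0), (0, -1), (0, 3)} : Set (ℝ × ℝ)) := by
      apply (convex_convexHull ℝ _).sum_mem
      · intro i _
        fin_cases i <;> simp <;>
          [nlinarith [neg_abs_le x]; nlinarith [le_abs_self x]; nlinarith; nlinarith]
      · simp [Fin.sum_univ_four]; ring
      · intro i _
        apply subset_convexHull
        fin_cases i <;> simp
    convert key using 1
    simp [Fin.sum_univ_four, Prod.ext_iff, Prod.smul_mk]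
    constructor <;> ring

lemma dilate_mem_iff (m : ℕ) (hm : 0 < m) (x y : ℤ) :
    ((x : ℝ), (y : ℝ)) ∈
        (m : ℝ) • convexHull ℝ ({((2:ℝ), (0:ℝ)), (-2, 0), (0, -1), (0, 3)} : Set (ℝ × ℝ)) ↔
      3 * |x| + 2 * y ≤ 6 * (m : ℤ) ∧ |x| ≤ 2 * y + 2 * m := by
  have hm' : (0 : ℝ) < m := by exact_mod_cast hm
  have hne : (m : ℝ) ≠ 0 := ne_of_gt hm'
  have hipos : (0 : ℝ) < (m:ℝ)⁻¹ := inv_pos.mpr hm'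
  have hinv : (m : ℝ)⁻¹ * (m : ℝ) = 1 := inv_mul_cancel₀ hne
  rw [Set.mem_smul_set_iff_inv_smul_mem₀ hne]
  have hsm : (m : ℝ)⁻¹ • ((x : ℝ), (y : ℝ)) = ((m:ℝ)⁻¹ * x, (m:ℝ)⁻¹ * y) := rfl
  rw [hsm, hull_mem_iff]
  have habs : |(m:ℝ)⁻¹ * x| = (m:ℝ)⁻¹ * |(x:ℝ)| := by
    rw [abs_mul, abs_of_nonneg (le_of_lt hipos)]
  rw [habs]
  have hcast : ((|x| : ℤ) : ℝ) = |(x : ℝ)| := by push_cast; ring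
  have hiff : (3 * ((m:ℝ)⁻¹ * |(x:ℝ)|) + 2 * ((m:ℝ)⁻¹ * y) ≤ 6 ∧
      (m:ℝ)⁻¹ * |(x:ℝ)| ≤ 2 * ((m:ℝ)⁻¹ * y) + 2) ↔
      (3 * |(x:ℝ)| + 2 * (y:ℝ) ≤ 6 * m ∧ |(x:ℝ)| ≤ 2 * (y:ℝ) + 2 * m) := by
    constructor
    · rintro ⟨h1, h2⟩
      constructor
      · nlinarith [mul_le_mul_of_nonneg_left h1 (le_of_lt hm')]
      · nlinarith [mul_le_mul_of_nonneg_left h2 (le_of_lt hm')]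
    · rintro ⟨h1, h2⟩
      constructor
      · nlinarith [mul_le_mul_of_nonneg_left h1 (le_of_lt hipos)]
      · nlinarith [mul_le_mul_of_nonneg_left h2 (le_of_lt hipos)]
  rw [hiff]
  constructor
  · rintro ⟨h1, h2⟩
    refine ⟨?_, ?_⟩ <;> [exact_mod_cast hcast ▸ h1; exact_mod_cast hcast ▸ h2]
  · rintro ⟨h1, h2⟩
    refine ⟨?_, ?_⟩
    · rw [← hcast]; exact_mod_cast h1
    · rw [← hcast]; exact_mod_cast h2

lemma count_y (m j : ℤ) (hm : 0 ≤ m) (hj : 0 ≤ j) (hjm : j ≤ 2*m) :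
    ((Finset.Icc (-m) (3*m)).filter (fun y => 3*j + 2*y ≤ 6*m ∧ j ≤ 2*y + 2*m)).card =
      (4*m - 2*j + 1 - j % 2).toNat := by
  rcases Int.even_or_odd j with ⟨k, hk⟩ | ⟨k, hk⟩
  · have hfe : (Finset.Icc (-m) (3*m)).filter (fun y => 3*j + 2*y ≤ 6*m ∧ j ≤ 2*y + 2*m) =
        Finset.Icc (k - m) (3*m - 3*k) := by
      ext y
      simp only [Finset.mem_filter, Finset.mem_Icc]
      omega
    rw [hfe, Int.card_Icc]
    congr 1
    omega
  · have hfo : (Finset.Icc (-m) (3*m)).filter (fun y => 3*j + 2*y ≤ 6*m ∧ j ≤ 2*y + 2*m) =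
        Finset.Icc (k + 1 - m) (3*m - 3*k - 2) := by
      ext y
      simp only [Finset.mem_filter, Finset.mem_Icc]
      omega
    rw [hfo, Int.card_Icc]
    congr 1
    omega

lemma sum_abs_par (n : ℕ) :
    ∑ x ∈ Finset.Icc (-(n:ℤ)) (n:ℤ), (2*|x| + |x| % 2) = 2*n*(n+1) + n + (n:ℤ) % 2 := by
  induction n with
  | zero => simp
  | succ n ih =>
    have hins : Finset.Icc (-((n:ℤ)+1)) ((n:ℤ)+1) =
        insert (-((n:ℤ)+1)) (insert ((n:ℤ)+1) (Finset.Icc (-(n:ℤ)) (n:ℤ))) := by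
      ext z
      simp only [Finset.mem_Icc, Finset.mem_insert]
      omega
    have hc : (-((n:ℤ)+1)) ∉ insert ((n:ℤ)+1) (Finset.Icc (-(n:ℤ)) (n:ℤ)) := by
      simp only [Finset.mem_insert, Finset.mem_Icc]
      omega
    have hc2 : ((n:ℤ)+1) ∉ Finset.Icc (-(n:ℤ)) (n:ℤ) := by
      simp only [Finset.mem_Icc]; omega
    have hcast : (((n+1 : ℕ)):ℤ) = (n:ℤ) + 1 := by push_cast; ring
    rw [hcast, hins, Finset.sum_insert hc, Finset.sum_insert hc2, ih]
    have hab : |(n:ℤ)+1| = (n:ℤ)+1 := abs_of_nonneg (by positivity)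
    rw [abs_neg, hab]
    have e1 : ∀ c : ℤ, (2*c) % 2 = 0 := fun c => by omega
    have e2 : ∀ c : ℤ, (2*c+1) % 2 = 1 := fun c => by omega
    rcases Int.even_or_odd (n:ℤ) with ⟨k, hk⟩ | ⟨k, hk⟩
    · have hk2 : (n:ℤ) = 2*k := by omega
      rw [hk2, show ((2*k:ℤ)+1) = 2*k+1 by ring, e1, e2]
      ring
    · have hk2 : (n:ℤ) = 2*k+1 := by omega
      rw [hk2, show ((2*k+1:ℤ)+1) = 2*(k+1) by ring, e1, e2]
      ring

lemma main_count (m : ℕ) :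
    (((Finset.Icc (-(2*(m:ℤ))) (2*(m:ℤ))) ×ˢ (Finset.Icc (-(m:ℤ)) (3*(m:ℤ)))).filter
      (fun p : ℤ × ℤ => 3*|p.1| + 2*p.2 ≤ 6*(m:ℤ) ∧ |p.1| ≤ 2*p.2 + 2*(m:ℤ))).card =
      8*m^2 + 2*m + 1 := by
  have hbi : (((Finset.Icc (-(2*(m:ℤ))) (2*(m:ℤ))) ×ˢ (Finset.Icc (-(m:ℤ)) (3*(m:ℤ)))).filter
      (fun p : ℤ × ℤ => 3*|p.1| + 2*p.2 ≤ 6*(m:ℤ) ∧ |p.1| ≤ 2*p.2 + 2*(m:ℤ))) =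
      (Finset.Icc (-(2*(m:ℤ))) (2*(m:ℤ))).biUnion (fun x =>
        ((Finset.Icc (-(m:ℤ)) (3*(m:ℤ))).filter
          (fun y => 3*|x| + 2*y ≤ 6*(m:ℤ) ∧ |x| ≤ 2*y + 2*(m:ℤ))).image (fun y => (x, y))) := by
    ext ⟨a, b⟩
    simp only [Finset.mem_filter, Finset.mem_product, Finset.mem_biUnion, Finset.mem_image,
      Finset.mem_Icc, Prod.mk.injEq]
    constructor
    · rintro ⟨⟨ha, hb⟩, h1, h2⟩
      exact ⟨a, ha, b, ⟨hb, h1, h2⟩, rfl, rfl⟩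
    · rintro ⟨x, hx, y, ⟨hy, h1, h2⟩, rfl, rfl⟩
      exact ⟨⟨hx, hy⟩, h1, h2⟩
  rw [hbi, Finset.card_biUnion]
  · have hcong : ∀ x ∈ Finset.Icc (-(2*(m:ℤ))) (2*(m:ℤ)),
        (((Finset.Icc (-(m:ℤ)) (3*(m:ℤ))).filter
          (fun y => 3*|x| + 2*y ≤ 6*(m:ℤ) ∧ |x| ≤ 2*y + 2*(m:ℤ))).image (fun y => (x, y))).card =
        (4*(m:ℤ) - 2*|x| + 1 - |x| % 2).toNat := by
      intro x hx
      rw [Finset.card_image_of_injective _ (fun y z h => by simpa using h)]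
      simp only [Finset.mem_Icc] at hx
      exact count_y (m:ℤ) |x| (by positivity) (abs_nonneg x) (abs_le.mpr ⟨by linarith [hx.1], hx.2⟩)
    rw [Finset.sum_congr rfl hcong]
    have hnn : ∀ x ∈ Finset.Icc (-(2*(m:ℤ))) (2*(m:ℤ)),
        ((4*(m:ℤ) - 2*|x| + 1 - |x| % 2).toNat : ℤ) = 4*(m:ℤ) - 2*|x| + 1 - |x| % 2 := by
      intro x hx
      simp only [Finset.mem_Icc] at hx
      have : |x| ≤ 2*(m:ℤ) := abs_le.mpr ⟨by linarith [hx.1], hx.2⟩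
      have h0 : 0 ≤ |x| := abs_nonneg x
      refine Int.toNat_of_nonneg ?_
      omega
    have key : (∑ x ∈ Finset.Icc (-(2*(m:ℤ))) (2*(m:ℤ)),
        (4*(m:ℤ) - 2*|x| + 1 - |x| % 2).toNat : ℤ) = 8*(m:ℤ)^2 + 2*m + 1 := by
      push_cast [Nat.cast_sum]
      rw [Finset.sum_congr rfl hnn]
      have step : ∀ x : ℤ, 4*(m:ℤ) - 2*|x| + 1 - |x| % 2 = (4*(m:ℤ) + 1) - (2*|x| + |x| % 2) := by
        intro x; ring
      rw [Finset.sum_congr rfl (fun x _ => step x), Finset.sum_sub_distrib, Finset.sum_const,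
        Int.card_Icc]
      have h2m : ∑ x ∈ Finset.Icc (-(2*(m:ℤ))) (2*(m:ℤ)), (2*|x| + |x| % 2) =
          2*(2*(m:ℤ))*(2*(m:ℤ)+1) + 2*(m:ℤ) + (2*(m:ℤ)) % 2 := by
        have := sum_abs_par (2*m)
        push_cast at this
        convert this using 2 <;> push_cast <;> ring
      rw [h2m]
      have hmod : (2*(m:ℤ)) % 2 = 0 := Int.mul_emod_right 2 m
      rw [hmod]
      have hcard : ((2*(m:ℤ) + 1 - -(2*(m:ℤ))).toNat : ℤ) = 4*(m:ℤ) + 1 := by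
        omega
      rw [nsmul_eq_mul, hcard]
      ring
    exact_mod_cast key
  · intro x hx y hy hxy
    simp only [Finset.disjoint_left, Finset.mem_image]
    rintro p ⟨a, _, rfl⟩ ⟨b, _, hb⟩
    exact hxy (congrArg Prod.fst hb).symm

theorem stmt_14 (m : ℕ) :
    Nat.card {p : ℤ × ℤ | ((p.1 : ℝ), (p.2 : ℝ)) ∈
        (m : ℝ) • convexHull ℝ ({((2:ℝ), (0:ℝ)), (-2, 0), (0, -1), (0, 3)} : Set (ℝ × ℝ))} =
      8 * m ^ 2 + 2 * m + 1 := by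
  rcases Nat.eq_zero_or_pos m with hm | hm
  · subst hm
    have hne : ({((2:ℝ), (0:ℝ)), (-2, 0), (0, -1), (0, 3)} : Set (ℝ × ℝ)).Nonempty :=
      ⟨(2, 0), by simp⟩
    have h0 : ((0:ℕ) : ℝ) • convexHull ℝ ({((2:ℝ), (0:ℝ)), (-2, 0), (0, -1), (0, 3)} : Set (ℝ × ℝ))
        = 0 := by
      rw [Nat.cast_zero]
      exact Set.zero_smul_set (convexHull_nonempty_iff.mpr hne)
    have hset : {p : ℤ × ℤ | ((p.1 : ℝ), (p.2 : ℝ)) ∈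
        ((0:ℕ) : ℝ) • convexHull ℝ ({((2:ℝ), (0:ℝ)), (-2, 0), (0, -1), (0, 3)} : Set (ℝ × ℝ))} =
        {((0:ℤ), (0:ℤ))} := by
      ext ⟨x, y⟩
      rw [Set.mem_setOf_eq, h0]
      simp [Prod.ext_iff]
    rw [hset]
    simp
  · have hset : {p : ℤ × ℤ | ((p.1 : ℝ), (p.2 : ℝ)) ∈
        (m : ℝ) • convexHull ℝ ({((2:ℝ), (0:ℝ)), (-2, 0), (0, -1), (0, 3)} : Set (ℝ × ℝ))} =
        ↑(((Finset.Icc (-(2*(m:ℤ))) (2*(m:ℤ))) ×ˢ (Finset.Icc (-(m:ℤ)) (3*(m:ℤ)))).filter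
          (fun p : ℤ × ℤ => 3*|p.1| + 2*p.2 ≤ 6*(m:ℤ) ∧ |p.1| ≤ 2*p.2 + 2*(m:ℤ))) := by
      ext ⟨x, y⟩
      rw [Set.mem_setOf_eq, dilate_mem_iff m hm x y]
      simp only [Finset.coe_filter, Set.mem_setOf_eq, Finset.mem_product, Finset.mem_Icc]
      have h1 : x ≤ |x| := le_abs_self x
      have h2 : -x ≤ |x| := neg_le_abs x
      have h3 : 0 ≤ |x| := abs_nonneg x
      constructor
      · rintro ⟨ha, hb⟩
        refine ⟨⟨⟨?_, ?_⟩, ?_, ?_⟩, ha, hb⟩ <;> omega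
      · rintro ⟨_, ha, hb⟩
        exact ⟨ha, hb⟩
    rw [hset, Nat.card_coe_set_eq, Set.ncard_coe_finset, main_count]
end
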